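/- arXiv:1412.3259 — 2 statements merged into one kernel-verified Lean document; each statement's English description precedes it below -/
import Mathlib

section
/- Let X be a compact Hausdorff topological space with a continuous right action of B, let M be a minimal set for the horocycle flow on X, and let t₀ > 0 satisfy g_{t₀}(M) = M. Then the union ⋃_{t∈ℝ} g_t(M) equals ⋃_{t∈[0,t₀]} g_t(M), and this set is a closed subset of X invariant under the right action of B. -/
open Matrix Real
open scoped MatrixGroups UpperHalfPlane

/-- The diagonal matrix `d(t)` generating the geodesic flow. -/
noncomputable def dMat (t : ℝ) : SL(2, ℝ) :=
  ⟨!![Real.exp (t / 2), 0; 0, Real.exp (-(t / 2))], by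
    simp [Matrix.det_fin_two_of, ← Real.exp_add]⟩

/-- The unipotent matrix `u(s)` generating the horocycle flow. -/
noncomputable def uMat (s : ℝ) : SL(2, ℝ) :=
  ⟨!![1, s; 0, 1], by simp [Matrix.det_fin_two_of]⟩

/-- The upper-triangular subgroup `B` of `SL(2,ℝ)` with positive diagonal. -/
def Bsub : Subgroup SL(2, ℝ) where
  carrier := {g | g.1 1 0 = 0 ∧ 0 < g.1 0 0}
  one_mem' := by norm_num
  mul_mem' := by
    rintro a b ⟨ha0, ha1⟩ ⟨hb0, hb1⟩
    constructor
    · show (a * b).1 1 0 = 0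
      rw [Matrix.SpecialLinearGroup.coe_mul, Matrix.mul_apply, Fin.sum_univ_two, ha0, hb0]
      ring
    · show 0 < (a * b).1 0 0
      rw [Matrix.SpecialLinearGroup.coe_mul, Matrix.mul_apply, Fin.sum_univ_two, hb0]
      simpa using mul_pos ha1 hb1
  inv_mem' := by
    rintro a ⟨ha0, ha1⟩
    have hdet := a.2
    rw [Matrix.det_fin_two, ha0] at hdet
    constructor
    · show (a⁻¹).1 1 0 = 0
      rw [Matrix.SpecialLinearGroup.SL2_inv_expl]
      simp [ha0]
    · show 0 < (a⁻¹).1 0 0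
      rw [Matrix.SpecialLinearGroup.SL2_inv_expl]
      simp only [Matrix.SpecialLinearGroup.coe_mk]
      show 0 < a.1 1 1
      nlinarith

theorem dMat_mem_B (t : ℝ) : dMat t ∈ Bsub := by
  constructor
  · show (dMat t).1 1 0 = 0
    simp [dMat]
  · show 0 < (dMat t).1 0 0
    simp [dMat, Real.exp_pos]

theorem uMat_mem_B (s : ℝ) : uMat s ∈ Bsub := by
  constructor
  · show (uMat s).1 1 0 = 0
    simp [uMat]
  · show 0 < (uMat s).1 0 0
    simp [uMat]

/-- The matrix topology on `SL(2,ℝ)`, induced from the space of matrices. -/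
instance : TopologicalSpace SL(2, ℝ) :=
  TopologicalSpace.induced (fun g => (g : Matrix (Fin 2) (Fin 2) ℝ)) inferInstance

/-- `d(t)` as an element of the subgroup `B`. -/
noncomputable def dB (t : ℝ) : Bsub := ⟨dMat t, dMat_mem_B t⟩

/-- `u(s)` as an element of the subgroup `B`. -/
noncomputable def uB (s : ℝ) : Bsub := ⟨uMat s, uMat_mem_B s⟩

section

variable {X : Type*} [TopologicalSpace X]

/-- `M` is a minimal set for the horocycle flow: nonempty, closed, invariant under the
horocycle flow, and properly containing no nonempty closed invariant subset. -/
def IsMinimalHoro (act : X → Bsub → X) (M : Set X) : Prop :=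
  M.Nonempty ∧ IsClosed M ∧ (∀ s : ℝ, (fun x => act x (uB s)) '' M = M) ∧
    ∀ M' : Set X, M' ⊆ M → M'.Nonempty → IsClosed M' →
      (∀ s : ℝ, (fun x => act x (uB s)) '' M' = M') → M' = M

end

/-!
Since `d(t) u(s) = u(eᵗ s) d(t)`, every translate `g_t(M)` of a `U`-invariant set is again
`U`-invariant, and writing `b ∈ B` as `d(t) u(s)` shows that the saturation `⋃ₜ g_t(M)` is
`B`-invariant. The times `t` with `g_t(M) = M` form a subgroup of `ℝ` containing `t₀`, so
reducing `t` modulo `t₀` shows the saturation is the union over `[0, t₀]`: the image of the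
compact set `[0, t₀] × M` under the continuous geodesic flow, hence closed.
-/

open Set

namespace Flow

variable {τ α : Type*} [TopologicalSpace τ] [TopologicalSpace α]

section AddGroup

variable [AddGroup τ] (ϕ : Flow τ α)

theorem image_image (s t : τ) (M : Set α) : ϕ s '' (ϕ t '' M) = ϕ (s + t) '' M := by
  rw [Set.image_image]
  simp only [← map_add]

def periods (M : Set α) : AddSubgroup τ where
  carrier := {t | ϕ t '' M = M}
  zero_mem' := by simp [map_zero]
  add_mem' {s t} (hs : ϕ s '' M = M) (ht : ϕ t '' M = M) := by
    change ϕ (s + t) '' M = M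
    rw [← image_image, ht, hs]
  neg_mem' {t} (ht : ϕ t '' M = M) := by
    change ϕ (-t) '' M = M
    conv_lhs => rw [← ht]
    rw [image_image, neg_add_cancel, map_zero, image_id]

end AddGroup

theorem iUnion_image_eq_biUnion_Icc [AddCommGroup τ] [LinearOrder τ] [IsOrderedAddMonoid τ]
    [Archimedean τ] (ϕ : Flow τ α) {M : Set α} {p : τ} (hp : 0 < p) (hM : ϕ p '' M = M) :
    ⋃ t, ϕ t '' M = ⋃ t ∈ Icc 0 p, ϕ t '' M := by
  refine Subset.antisymm (iUnion_subset fun t => ?_)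
    (iUnion₂_subset fun t _ => subset_iUnion (fun t => ϕ t '' M) t)
  have hn : ϕ (toIcoDiv hp 0 t • p) '' M = M := zsmul_mem (show p ∈ ϕ.periods M from hM) _
  rw [← toIcoMod_add_toIcoDiv_zsmul hp 0 t, ← image_image, hn]
  exact subset_biUnion_of_mem (u := fun t => ϕ t '' M)
    (Ico_subset_Icc_self (toIcoMod_mem_Ico' hp t))

theorem isCompact_biUnion_image [AddZero τ] (ϕ : Flow τ α) {K : Set τ} {M : Set α}
    (hK : IsCompact K) (hM : IsCompact M) : IsCompact (⋃ t ∈ K, ϕ t '' M) := by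
  rw [iUnion_image_left, ← image_uncurry_prod]
  exact (hK.prod hM).image ϕ.cont'

end Flow

theorem dB_add (s t : ℝ) : dB (s + t) = dB s * dB t := by
  ext i j
  simp only [dB, Subgroup.coe_mul, Matrix.SpecialLinearGroup.coe_mul]
  fin_cases i <;> fin_cases j <;>
    simp [dMat, Matrix.mul_apply, Fin.sum_univ_two, ← Real.exp_add] <;> ring_nf

theorem dB_zero : dB 0 = 1 := by
  ext i j
  fin_cases i <;> fin_cases j <;> simp [dB, dMat]

theorem dB_mul_uB (t s : ℝ) : dB t * uB s = uB (Real.exp t * s) * dB t := by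
  ext i j
  simp only [dB, uB, Subgroup.coe_mul, Matrix.SpecialLinearGroup.coe_mul]
  fin_cases i <;> fin_cases j <;>
    simp [dMat, uMat, Matrix.mul_apply, Fin.sum_univ_two]
  rw [mul_right_comm, ← Real.exp_add]
  ring_nf

theorem continuous_dB : Continuous dB := by
  refine Continuous.subtype_mk ?_ _
  rw [continuous_induced_rng]
  refine continuous_matrix fun i j => ?_
  fin_cases i <;> fin_cases j <;> simp [dMat] <;> fun_prop

theorem exists_eq_dB_mul_uB (g : Bsub) : ∃ t s : ℝ, g = dB t * uB s := by
  obtain ⟨⟨g, hdet⟩, hg₁₀ : g 1 0 = 0, hg₀₀ : 0 < g 0 0⟩ := g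
  rw [Matrix.det_fin_two, hg₁₀, mul_zero, sub_zero] at hdet
  have hexp : Real.exp (Real.log (g 0 0)) = g 0 0 := Real.exp_log hg₀₀
  refine ⟨2 * Real.log (g 0 0), g 0 1 / g 0 0, ?_⟩
  ext i j
  simp only [dB, uB, Subgroup.coe_mul, Matrix.SpecialLinearGroup.coe_mul]
  fin_cases i <;> fin_cases j <;>
    simp [dMat, uMat, Matrix.mul_apply, Fin.sum_univ_two, hg₁₀, hexp, Real.exp_neg]
  · field_simp
  · exact eq_inv_of_mul_eq_one_right hdet

section RightAction

variable {X : Type*} {act : X → Bsub → X}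

variable (act) in
noncomputable def geodesicFlow [TopologicalSpace X] (act_one : ∀ x : X, act x 1 = x)
    (act_mul : ∀ (x : X) (g h : Bsub), act (act x g) h = act x (g * h))
    (act_cont : Continuous fun p : X × Bsub => act p.1 p.2) : Flow ℝ X where
  toFun t x := act x (dB t)
  cont' := act_cont.comp (continuous_snd.prodMk (continuous_dB.comp continuous_fst))
  map_add' s t x := by rw [act_mul, ← dB_add, add_comm]
  map_zero' x := by rw [dB_zero, act_one]

theorem image_act_image_act (act_mul : ∀ (x : X) (g h : Bsub), act (act x g) h = act x (g * h))
    (g h : Bsub) (S : Set X) :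
    (fun x => act x h) '' ((fun x => act x g) '' S) = (fun x => act x (g * h)) '' S := by
  simp only [Set.image_image, act_mul]

theorem image_act_uB_image_act_dB
    (act_mul : ∀ (x : X) (g h : Bsub), act (act x g) h = act x (g * h)) {M : Set X}
    (hM : ∀ s : ℝ, (fun x => act x (uB s)) '' M = M) (t s : ℝ) :
    (fun x => act x (uB s)) '' ((fun x => act x (dB t)) '' M) = (fun x => act x (dB t)) '' M := by
  rw [image_act_image_act act_mul, dB_mul_uB, ← image_act_image_act act_mul, hM]

theorem image_act_iUnion_image_act_dB
    (act_mul : ∀ (x : X) (g h : Bsub), act (act x g) h = act x (g * h)) {M : Set X}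
    (hM : ∀ s : ℝ, (fun x => act x (uB s)) '' M = M) (g : Bsub) :
    (fun x => act x g) '' (⋃ t : ℝ, (fun x => act x (dB t)) '' M) =
      ⋃ t : ℝ, (fun x => act x (dB t)) '' M := by
  obtain ⟨t', s, rfl⟩ := exists_eq_dB_mul_uB g
  have hshift : ∀ t, (fun x => act x (dB t' * uB s)) '' ((fun x => act x (dB t)) '' M) =
      (fun x => act x (dB (t + t'))) '' M := fun t => by
    rw [image_act_image_act act_mul, ← mul_assoc, ← dB_add, ← image_act_image_act act_mul,
      image_act_uB_image_act_dB act_mul hM]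
  rw [image_iUnion]
  simp only [hshift]
  exact (Equiv.addRight t').surjective.iUnion_comp fun t => (fun x => act x (dB t)) '' M

end RightAction

/-- Let `X` be a compact Hausdorff space with a continuous right action of `B`,
let `M` be a minimal set for the horocycle flow and let `t₀ > 0` satisfy `g_{t₀}(M) = M`. Then
`⋃_{t ∈ ℝ} g_t(M) = ⋃_{t ∈ [0,t₀]} g_t(M)`, and this set is closed and invariant under the
right `B`-action. -/
theorem geodesic_saturation_of_periodic_minimal_set
    {X : Type*} [TopologicalSpace X] [CompactSpace X] [T2Space X]
    (act : X → Bsub → X)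
    (act_one : ∀ x : X, act x 1 = x)
    (act_mul : ∀ (x : X) (g h : Bsub), act (act x g) h = act x (g * h))
    (act_cont : Continuous fun p : X × Bsub => act p.1 p.2)
    (M : Set X) (hM : IsMinimalHoro act M)
    (t₀ : ℝ) (ht₀ : 0 < t₀)
    (hfix : (fun x => act x (dB t₀)) '' M = M) :
    (⋃ t : ℝ, (fun x => act x (dB t)) '' M) =
        (⋃ t ∈ Set.Icc (0 : ℝ) t₀, (fun x => act x (dB t)) '' M) ∧
      IsClosed (⋃ t : ℝ, (fun x => act x (dB t)) '' M) ∧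
      ∀ g : Bsub, (fun x => act x g) '' (⋃ t : ℝ, (fun x => act x (dB t)) '' M) =
        ⋃ t : ℝ, (fun x => act x (dB t)) '' M := by
  obtain ⟨-, hM_closed, hM_horo, -⟩ := hM
  let ϕ := geodesicFlow act act_one act_mul act_cont
  have hsat : ⋃ t, ϕ t '' M = ⋃ t ∈ Icc 0 t₀, ϕ t '' M :=
    ϕ.iUnion_image_eq_biUnion_Icc ht₀ hfix
  refine ⟨hsat, ?_, image_act_iUnion_image_act_dB act_mul hM_horo⟩
  change IsClosed (⋃ t, ϕ t '' M)
  rw [hsat]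
  exact (ϕ.isCompact_biUnion_image isCompact_Icc hM_closed.isCompact).isClosed
end

section
/- Let Γ be a subgroup of SL(2,ℝ) that has bounded geometry below some a > 0, and suppose the quotient surface Γ\ℍ is coarsely tame. Then for every g₀ ∈ SL(2,ℝ), either the set {γ·g₀·u(s) : γ ∈ Γ, s ∈ ℝ} is dense in SL(2,ℝ) (equivalently, the horocycle orbit of the point Γg₀ of the unit tangent bundle Γ\SL(2,ℝ) is dense), or there exists a real number t₀ > 0 such that g₀·d(t₀) lies in the closure of {γ·g₀·u(s) : γ ∈ Γ, s ∈ ℝ}. -/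
/-!
Write `horoSat Γ g₀ = g₀ · (g₀⁻¹ Γ g₀) · {u(s)}`. If `η n ∈ g₀⁻¹ Γ g₀` have `(0,0)`-entry tending
to `λ > 1` and `(1,0)`-entry tending to `0`, then `η n · u(s n) → diag(λ, λ⁻¹) = d(2 log λ)` for a
suitable `s n`, so `g₀ · d(2 log λ)` lies in the closure. Conjugation by `d(t)` fixes the
`(0,0)`-entry and multiplies the `(1,0)`-entry by `e^{-t}`, so it suffices to find `δ n ∈ Γ` and
`t n → ∞` such that `(g₀ d(t n))⁻¹ δ n (g₀ d(t n))` converges to some `y` with `y 0 0 > 1`.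
Both alternatives of coarse tameness provide them.

If the ray returns to a bounded region at the integer times `n` via `χ n ∈ Γ`, the elements
`e n = g₀⁻¹ χ n g₀ d(n)` stay in a compact set. Along an ultrafilter, let `F Δ = lim e (n + Δ)`
and `G = lim F Δ`. For suitable `Δ' ≥ Δ + 2`, the elements `e (n + Δ')⁻¹ e (n + Δ) d(Δ' - Δ)`
converge to `(F Δ')⁻¹ F Δ d(Δ' - Δ)`, whose `(0,0)`-entry is at least `e^{(Δ' - Δ)/2} / 2 > 1`.

If the ray meets closed geodesics of length at most `b` at times `t n → ∞`, the conjugates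
`q n = (g₀ d(t n))⁻¹ γ n (g₀ d(t n))` move `i` by at most `b` and every point by at least `a`.
The first bound makes them precompact. The second forces `|tr q n| ≥ 2 cosh (a/2)`, so a limit
`Q` is hyperbolic, and `Q ^ 2` or `Q ^ (-2)` has `(0,0)`-entry greater than `1`.
-/

open Matrix Real
open scoped MatrixGroups UpperHalfPlane

/-- The element `-1` of `SL(2,ℝ)`. -/
def negOne : SL(2, ℝ) := ⟨!![-1, 0; 0, -1], by norm_num [Matrix.det_fin_two_of]⟩

/-- The translation length `ℓ(γ) = inf {dist(z, γ·z) : z ∈ ℍ}`. -/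
noncomputable def transLen (γ : SL(2, ℝ)) : ℝ := ⨅ z : ℍ, dist z (γ • z)

/-- The set `{γ·g₀·u(s) : γ ∈ Γ, s ∈ ℝ}`, i.e. the lift to `SL(2,ℝ)` of the horocycle
orbit of the point `Γg₀` of `Γ\SL(2,ℝ)`. -/
def horoSat (Γ : Subgroup SL(2, ℝ)) (g₀ : SL(2, ℝ)) : Set SL(2, ℝ) :=
  {x | ∃ γ ∈ Γ, ∃ s : ℝ, x = γ * g₀ * uMat s}

/-- The geodesic ray determined by `g`: `r_g(t) = (g·d(t))·i ∈ ℍ`. -/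
noncomputable def ray (g : SL(2, ℝ)) (t : ℝ) : ℍ := (g * dMat t) • UpperHalfPlane.I

/-- `Γ` has bounded geometry below `a`: every nontrivial element of `Γ` moves every point
of `ℍ` at distance at least `a`. -/
def BoundedGeomBelow (Γ : Subgroup SL(2, ℝ)) (a : ℝ) : Prop :=
  ∀ (z : ℍ) (γ : SL(2, ℝ)), γ ∈ Γ → γ ≠ 1 → γ ≠ negOne → a ≤ dist z (γ • z)

/-- The quotient surface `Γ\ℍ` is coarsely tame: it is noncompact and there is `b > 0`
such that every geodesic ray either stays in a compact region of the quotient or meets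
closed geodesics of length at most `b` at arbitrarily large times. -/
def CoarselyTame (Γ : Subgroup SL(2, ℝ)) : Prop :=
  (¬ ∃ K : Set ℍ, IsCompact K ∧ ∀ z : ℍ, ∃ γ ∈ Γ, γ • z ∈ K) ∧
    ∃ b > 0, ∀ g : SL(2, ℝ),
      (∃ K : Set ℍ, IsCompact K ∧ ∀ t ≥ (0 : ℝ), ∃ γ ∈ Γ, γ • ray g t ∈ K) ∨
      (∀ T : ℝ, ∃ t ≥ T, ∃ γ ∈ Γ, γ ≠ 1 ∧ γ ≠ negOne ∧
        dist (ray g t) (γ • ray g t) = transLen γ ∧ transLen γ ≤ b)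

open Filter Topology UpperHalfPlane

-- The topology fixed above is Mathlib's subspace topology on `SL(2, ℝ)` only up to unfolding,
-- which instance search does not see.
instance : IsTopologicalGroup SL(2, ℝ) := Matrix.SpecialLinearGroup.topologicalGroup

@[simp] lemma coe_dMat (t : ℝ) :
    (dMat t : Matrix (Fin 2) (Fin 2) ℝ) = !![exp (t / 2), 0; 0, exp (-(t / 2))] := rfl

@[simp] lemma coe_uMat (s : ℝ) : (uMat s : Matrix (Fin 2) (Fin 2) ℝ) = !![1, s; 0, 1] := rfl

lemma dMat_add (s t : ℝ) : dMat (s + t) = dMat s * dMat t := by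
  ext i j
  fin_cases i <;> fin_cases j <;> simp [Matrix.mul_apply, ← Real.exp_add] <;> ring_nf

lemma dMat_neg (t : ℝ) : dMat (-t) = (dMat t)⁻¹ := by
  refine eq_inv_of_mul_eq_one_left ?_
  rw [← dMat_add, neg_add_cancel]
  ext i j
  fin_cases i <;> fin_cases j <;> simp

lemma mul_dMat_apply_zero_zero (g : SL(2, ℝ)) (t : ℝ) :
    (g * dMat t) 0 0 = g 0 0 * exp (t / 2) := by
  simp [Matrix.mul_apply, Fin.sum_univ_two]

lemma dMat_mul_mul_dMat_neg_apply_zero_zero (t : ℝ) (g : SL(2, ℝ)) :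
    (dMat t * g * dMat (-t)) 0 0 = g 0 0 := by
  rw [Matrix.SpecialLinearGroup.coe_mul, Matrix.SpecialLinearGroup.coe_mul, Matrix.mul_apply,
    Fin.sum_univ_two]
  simp [Matrix.mul_apply, Fin.sum_univ_two, mul_right_comm _ _ (exp _), ← exp_add, neg_div]

lemma dMat_mul_mul_dMat_neg_apply_one_zero (t : ℝ) (g : SL(2, ℝ)) :
    (dMat t * g * dMat (-t)) 1 0 = exp (-t) * g 1 0 := by
  rw [Matrix.SpecialLinearGroup.coe_mul, Matrix.SpecialLinearGroup.coe_mul, Matrix.mul_apply,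
    Fin.sum_univ_two]
  simp [Matrix.mul_apply, Fin.sum_univ_two, mul_right_comm _ _ (exp _), ← exp_add, neg_div]
  exact Or.inl (by ring)

lemma SL2_det_eq_one (g : SL(2, ℝ)) : g 0 0 * g 1 1 - g 0 1 * g 1 0 = 1 := by
  have h := g.det_coe
  rwa [Matrix.det_fin_two] at h

lemma tendsto_SL2_iff {ι : Type*} {l : Filter ι} {f : ι → SL(2, ℝ)} {g : SL(2, ℝ)} :
    Tendsto f l (𝓝 g) ↔ ∀ i j, Tendsto (fun n => f n i j) l (𝓝 (g i j)) :=
  (Topology.IsInducing.induced _).tendsto_nhds_iff.trans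
    (tendsto_pi_nhds.trans (forall_congr' fun _ => tendsto_pi_nhds))

lemma isCompact_setOf_abs_apply_le (M : ℝ) :
    IsCompact {g : SL(2, ℝ) | ∀ i j, |g i j| ≤ M} := by
  have hbox : IsCompact (Set.univ.pi fun _ : Fin 2 => Set.univ.pi fun _ : Fin 2 => Set.Icc (-M) M) :=
    isCompact_univ_pi fun _ => isCompact_univ_pi fun _ => isCompact_Icc
  have hemb : Topology.IsClosedEmbedding fun g : SL(2, ℝ) => (g : Matrix (Fin 2) (Fin 2) ℝ) :=
    Matrix.SpecialLinearGroup.isClosedEmbedding_val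
  convert hemb.isCompact_preimage hbox using 1
  exact Set.ext fun g => by
    change _ ↔ ∀ i ∈ Set.univ, ∀ j ∈ Set.univ, g i j ∈ Set.Icc (-M) M
    simp [abs_le]

lemma IsCompact.exists_tendsto_ultrafilter {X ι : Type*} [TopologicalSpace X] {K : Set X}
    (hK : IsCompact K) (U : Ultrafilter ι) {f : ι → X} (hf : ∀ i, f i ∈ K) :
    ∃ x ∈ K, Tendsto f U (𝓝 x) :=
  hK.ultrafilter_le_nhds (U.map f) (le_principal_iff.2 (mem_map.2 (univ_mem' hf)))

lemma two_mul_im_mul_sinh_half_dist_smul (g : SL(2, ℝ)) (z : ℍ) :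
    2 * z.im * sinh (dist z (g • z) / 2) =
      ‖(g 1 0 : ℂ) * z ^ 2 + (g 1 1 - g 0 0 : ℂ) * z - g 0 1‖ := by
  set D : ℂ := (g 1 0 : ℂ) * z + g 1 1
  have hdet := SL2_det_eq_one g
  have hD : D ≠ 0 := by
    refine linear_ne_zero (cd := ![g 1 0, g 1 1]) z fun h => ?_
    have h0 := congrFun h 0
    have h1 := congrFun h 1
    simp only [Matrix.cons_val_zero, Matrix.cons_val_one, Pi.zero_apply] at h0 h1
    simp [h0, h1] at hdet
  have hw : ((g • z : ℍ) : ℂ) = ((g 0 0 : ℂ) * z + g 0 1) / D := by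
    simp [D, coe_specialLinearGroup_apply]
  have hsub : (z : ℂ) - (g • z : ℍ) =
      ((g 1 0 : ℂ) * z ^ 2 + (g 1 1 - g 0 0 : ℂ) * z - g 0 1) / D := by
    rw [hw]; field_simp; ring
  have him : (g • z).im = z.im / ‖D‖ ^ 2 := by
    rw [← coe_im, hw, Complex.div_im, ← Complex.normSq_eq_norm_sq]
    have hN : Complex.normSq D ≠ 0 := by simpa using hD
    field_simp
    simp [D]
    linear_combination z.im * hdet
  have hsqrt : √(z.im * (g • z).im) = z.im / ‖D‖ := by
    rw [him, show z.im * (z.im / ‖D‖ ^ 2) = (z.im / ‖D‖) ^ 2 by ring]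
    exact Real.sqrt_sq (div_pos z.im_pos (norm_pos_iff.2 hD)).le
  rw [sinh_half_dist, Complex.dist_eq, hsub, norm_div, hsqrt]
  field_simp

lemma sq_two_mul_im_mul_sinh_half_dist_smul (g : SL(2, ℝ)) (z : ℍ) :
    (2 * z.im * sinh (dist z (g • z) / 2)) ^ 2 =
      (g 1 0 * (z.re ^ 2 - z.im ^ 2) + (g 1 1 - g 0 0) * z.re - g 0 1) ^ 2 +
        (2 * g 1 0 * z.re * z.im + (g 1 1 - g 0 0) * z.im) ^ 2 := by
  rw [two_mul_im_mul_sinh_half_dist_smul, Complex.sq_norm, Complex.normSq_apply]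
  simp only [Complex.sub_re, Complex.add_re, Complex.mul_re, Complex.sub_im, Complex.add_im,
    Complex.mul_im, Complex.ofReal_re, Complex.ofReal_im, sq, coe_re, coe_im]
  ring

lemma sum_sq_apply_eq_two_mul_cosh_dist (g : SL(2, ℝ)) :
    g 0 0 ^ 2 + g 0 1 ^ 2 + g 1 0 ^ 2 + g 1 1 ^ 2 = 2 * cosh (dist I (g • I)) := by
  have h := sq_two_mul_im_mul_sinh_half_dist_smul g I
  have hcosh : cosh (dist I (g • I)) = 1 + 2 * sinh (dist I (g • I) / 2) ^ 2 := by
    conv_lhs => rw [← mul_div_cancel₀ (dist I (g • I)) two_ne_zero]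
    rw [Real.cosh_two_mul, Real.cosh_sq]
    ring
  simp only [I_re, I_im] at h
  rw [hcosh]
  linear_combination -h + 2 * SL2_det_eq_one g

lemma abs_apply_le_of_dist_I_smul_le {D : ℝ} {g : SL(2, ℝ)} (h : dist I (g • I) ≤ D)
    (i j : Fin 2) : |g i j| ≤ 2 * cosh D := by
  have hsum := sum_sq_apply_eq_two_mul_cosh_dist g
  have hcosh : cosh (dist I (g • I)) ≤ cosh D := by
    rw [Real.cosh_le_cosh, abs_of_nonneg dist_nonneg]
    exact h.trans (le_abs_self D)
  have hsq : g i j ^ 2 ≤ 2 * cosh D := by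
    fin_cases i <;> fin_cases j <;> simp <;>
      nlinarith [sq_nonneg (g 0 0), sq_nonneg (g 0 1), sq_nonneg (g 1 0), sq_nonneg (g 1 1)]
  have h1 : 1 ≤ 2 * cosh D := by linarith [Real.one_le_cosh D]
  nlinarith [abs_nonneg (g i j), sq_abs (g i j)]

lemma sq_two_mul_mul_sinh_half_le_of_le_dist {a : ℝ} (ha : 0 ≤ a) {g : SL(2, ℝ)}
    (h : ∀ z : ℍ, a ≤ dist z (g • z)) (x : ℝ) {y : ℝ} (hy : 0 < y) :
    (2 * y * sinh (a / 2)) ^ 2 ≤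
      (g 1 0 * (x ^ 2 - y ^ 2) + (g 1 1 - g 0 0) * x - g 0 1) ^ 2 +
        (2 * g 1 0 * x * y + (g 1 1 - g 0 0) * y) ^ 2 := by
  have hz := sq_two_mul_im_mul_sinh_half_dist_smul g (mk ⟨x, y⟩ hy)
  simp only [mk_re, mk_im] at hz
  rw [← hz]
  have : sinh (a / 2) ≤ sinh (dist (mk ⟨x, y⟩ hy) (g • mk ⟨x, y⟩ hy) / 2) :=
    Real.sinh_le_sinh.2 (by linarith [h (mk ⟨x, y⟩ hy)])
  gcongr

lemma four_mul_sq_le_of_forall_sq_le {s Δ : ℝ} (hs : 0 < s)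
    (h : ∀ v, 0 < v → 16 * s ^ 2 * v ^ 2 ≤ (Δ + v ^ 2) ^ 2) : 4 * s ^ 2 ≤ Δ := by
  by_contra! hlt
  have h2s := h (2 * s) (by positivity)
  have hneg : Δ ≤ -12 * s ^ 2 := by nlinarith
  have hΔ := h (√(-Δ)) (Real.sqrt_pos.2 (by nlinarith))
  rw [Real.sq_sqrt (by nlinarith), add_neg_cancel] at hΔ
  nlinarith [pow_pos hs 2, pow_pos hs 4]

lemma two_mul_cosh_half_le_abs_trace {a : ℝ} (ha : 0 < a) {g : SL(2, ℝ)}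
    (h : ∀ z : ℍ, a ≤ dist z (g • z)) : 2 * cosh (a / 2) ≤ |g 0 0 + g 1 1| := by
  set s := sinh (a / 2)
  have hs : 0 < s := Real.sinh_pos_iff.2 (by linarith)
  have hdisp := sq_two_mul_mul_sinh_half_le_of_le_dist ha.le h
  have hdet := SL2_det_eq_one g
  suffices hΔ : 4 * s ^ 2 ≤ (g 0 0 + g 1 1) ^ 2 - 4 by
    have hc : (2 * cosh (a / 2)) ^ 2 ≤ (g 0 0 + g 1 1) ^ 2 := by
      rw [mul_pow, Real.cosh_sq]; linarith
    simpa [abs_of_pos (Real.cosh_pos _)] using sq_le_sq.1 hc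
  rcases eq_or_ne (g 1 0) 0 with hc | hc
  · rcases eq_or_ne (g 0 0) (g 1 1) with had | had
    · have hb := hdisp 0 (y := |g 0 1| / s + 1) (by positivity)
      have hy : (|g 0 1| / s + 1) * s = |g 0 1| + s := by field_simp
      simp only [hc, had] at hb
      nlinarith [abs_nonneg (g 0 1), sq_abs (g 0 1)]
    · have hx : (g 1 1 - g 0 0) * (g 0 1 / (g 1 1 - g 0 0)) = g 0 1 :=
        mul_div_cancel₀ _ (sub_ne_zero.2 had.symm)
      have hb := hdisp (g 0 1 / (g 1 1 - g 0 0)) one_pos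
      simp only [hc, hx] at hb
      simp only [hc, mul_zero, sub_zero] at hdet
      nlinarith
  refine four_mul_sq_le_of_forall_sq_le hs fun v hv => ?_
  -- Evaluate the displacement bound at `z = x₀ + iy`, where `x₀` kills the second square.
  set x₀ := (g 0 0 - g 1 1) / (2 * g 1 0)
  set y := v / (2 * |g 1 0|)
  have hx₀ : 2 * g 1 0 * x₀ = g 0 0 - g 1 1 := mul_div_cancel₀ _ (by positivity)
  have hy : 2 * |g 1 0| * y = v := mul_div_cancel₀ _ (by positivity)
  set R := g 1 0 * (x₀ ^ 2 - y ^ 2) + (g 1 1 - g 0 0) * x₀ - g 0 1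
  have hR : 4 * g 1 0 * R = -((g 0 0 + g 1 1) ^ 2 - 4 + v ^ 2) := by
    rw [← hy, mul_pow, mul_pow, sq_abs]
    linear_combination (2 * g 1 0 * x₀ - (g 0 0 - g 1 1)) * hx₀ + 4 * hdet
  have hI : 2 * g 1 0 * x₀ * y + (g 1 1 - g 0 0) * y = 0 := by
    linear_combination y * hx₀
  have hb := hdisp x₀ (by positivity : 0 < y)
  rw [hI] at hb
  calc 16 * s ^ 2 * v ^ 2 = 16 * g 1 0 ^ 2 * (2 * y * s) ^ 2 := by
        rw [← hy]; linear_combination (64 * s ^ 2 * y ^ 2) * sq_abs (g 1 0)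
    _ ≤ 16 * g 1 0 ^ 2 * (R ^ 2 + 0 ^ 2) := by gcongr
    _ = ((g 0 0 + g 1 1) ^ 2 - 4 + v ^ 2) ^ 2 := by
        linear_combination (4 * g 1 0 * R - ((g 0 0 + g 1 1) ^ 2 - 4) - v ^ 2) * hR

lemma exists_one_lt_zpow_apply_zero_zero {g : SL(2, ℝ)} (h : 2 < |g 0 0 + g 1 1|) :
    ∃ k : ℤ, 1 < (g ^ k) 0 0 := by
  have htr : 2 < (g ^ 2) 0 0 + (g ^ 2) 1 1 := by
    simp only [sq, Matrix.SpecialLinearGroup.coe_mul, Matrix.mul_apply, Fin.sum_univ_two]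
    nlinarith [SL2_det_eq_one g, sq_abs (g 0 0 + g 1 1)]
  by_cases h2 : 1 < (g ^ 2) 0 0
  · exact ⟨2, by simpa using h2⟩
  · refine ⟨-2, ?_⟩
    have hinv : ((g ^ 2)⁻¹ : SL(2, ℝ)) 0 0 = (g ^ 2) 1 1 := by
      simp [Matrix.SpecialLinearGroup.SL2_inv_expl]
    rw [_root_.zpow_neg, zpow_ofNat, hinv]
    linarith

lemma tendsto_mul_uMat_dMat {ι : Type*} {l : Filter ι} {η : ι → SL(2, ℝ)} {t : ℝ}
    (h00 : Tendsto (fun i => η i 0 0) l (𝓝 (exp (t / 2))))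
    (h10 : Tendsto (fun i => η i 1 0) l (𝓝 0)) :
    Tendsto (fun i => η i * uMat (-η i 0 1 / η i 0 0)) l (𝓝 (dMat t)) := by
  have hne : ∀ᶠ i in l, η i 0 0 ≠ 0 := h00.eventually_ne (exp_pos _).ne'
  rw [tendsto_SL2_iff]
  intro i j
  fin_cases i <;> fin_cases j <;> simp [Matrix.mul_apply, Fin.sum_univ_two]
  · exact h00
  · refine tendsto_const_nhds.congr' (hne.mono fun i hi => ?_)
    field_simp
    ring
  · exact h10
  · have hinv : Tendsto (fun i => (η i 0 0)⁻¹) l (𝓝 (exp (-(t / 2)))) := by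
      simpa [Real.exp_neg] using h00.inv₀ (exp_pos _).ne'
    refine hinv.congr' (hne.mono fun i hi => ?_)
    field_simp
    linear_combination -SL2_det_eq_one (η i)

section HorocycleOrbitClosure

variable {Γ : Subgroup SL(2, ℝ)} {g₀ : SL(2, ℝ)}

lemma exists_dMat_mem_closure_horoSat {ι : Type*} {l : Filter ι} [l.NeBot] {δ : ι → SL(2, ℝ)}
    (hδ : ∀ i, δ i ∈ Γ) {t : ι → ℝ} (ht : Tendsto t l atTop) {y : SL(2, ℝ)}
    (hy : Tendsto (fun i => (g₀ * dMat (t i))⁻¹ * δ i * (g₀ * dMat (t i))) l (𝓝 y))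
    (hy₁ : 1 < y 0 0) :
    ∃ t₀ > 0, g₀ * dMat t₀ ∈ closure (horoSat Γ g₀) := by
  set Y := fun i => (g₀ * dMat (t i))⁻¹ * δ i * (g₀ * dMat (t i))
  set η := fun i => g₀⁻¹ * δ i * g₀
  have hηY : ∀ i, η i = dMat (t i) * Y i * dMat (-t i) := by
    intro i
    simp only [η, Y, dMat_neg]
    group
  have hη00 : ∀ i, η i 0 0 = Y i 0 0 := fun i => by
    rw [hηY, dMat_mul_mul_dMat_neg_apply_zero_zero]
  have hη10 : ∀ i, η i 1 0 = exp (-t i) * Y i 1 0 := fun i => by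
    rw [hηY, dMat_mul_mul_dMat_neg_apply_one_zero]
  have hexp : Tendsto (fun i => exp (-t i)) l (𝓝 0) :=
    tendsto_exp_atBot.comp (tendsto_neg_atTop_atBot.comp ht)
  have hY : ∀ j k, Tendsto (fun i => Y i j k) l (𝓝 (y j k)) := tendsto_SL2_iff.1 hy
  have hlog : exp (2 * log (y 0 0) / 2) = y 0 0 := by
    rw [mul_div_cancel_left₀ _ two_ne_zero, exp_log (by linarith)]
  have hlim := tendsto_mul_uMat_dMat (η := η) (t := 2 * log (y 0 0))
    (by simpa only [hη00, hlog] using hY 0 0)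
    (by simpa only [hη10, zero_mul] using hexp.mul (hY 1 0))
  refine ⟨2 * log (y 0 0), mul_pos two_pos (log_pos hy₁), mem_closure_of_tendsto
    (hlim.const_mul g₀) (Eventually.of_forall fun i => ⟨δ i, hδ i, -η i 0 1 / η i 0 0, ?_⟩)⟩
  simp only [η]
  group

lemma exists_dMat_mem_closure_horoSat_of_bounded_ray {R : ℝ}
    (h : ∀ n : ℕ, ∃ γ ∈ Γ, dist (γ • ray g₀ n) I ≤ R) :
    ∃ t₀ > 0, g₀ * dMat t₀ ∈ closure (horoSat Γ g₀) := by
  choose χ hχΓ hχR using h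
  set e : ℕ → SL(2, ℝ) := fun n => g₀⁻¹ * χ n * g₀ * dMat n
  set K := {g : SL(2, ℝ) | ∀ i j, |g i j| ≤ 2 * cosh (dist (g₀ • I) I + R)}
  have hK : IsCompact K := isCompact_setOf_abs_apply_le _
  have heK : ∀ n, e n ∈ K := fun n => abs_apply_le_of_dist_I_smul_le <|
    calc dist I (e n • I) = dist (g₀ • I) (χ n • ray g₀ n) := by
          rw [← dist_smul g₀]; simp [e, ray, mul_smul]
      _ ≤ dist (g₀ • I) I + dist (χ n • ray g₀ n) I := dist_triangle_right _ _ _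
      _ ≤ dist (g₀ • I) I + R := by linarith [hχR n]
  let U := Ultrafilter.of (atTop : Filter ℕ)
  have hU : (U : Filter ℕ) ≤ atTop := Ultrafilter.of_le _
  choose F hFK hF using fun Δ : ℕ => hK.exists_tendsto_ultrafilter U fun n => heK (n + Δ)
  obtain ⟨G, -, hG⟩ := hK.exists_tendsto_ultrafilter U hFK
  have h00 : Continuous fun g : SL(2, ℝ) => g 0 0 := by fun_prop
  obtain ⟨Δ, hΔ⟩ : ∃ Δ, 1 / 2 < (G⁻¹ * F Δ) 0 0 := by
    have hlim := (h00.tendsto _).comp (hG.const_mul G⁻¹)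
    rw [inv_mul_cancel] at hlim
    exact (hlim.eventually (lt_mem_nhds (by norm_num))).exists
  obtain ⟨Δ', hΔ', hΔΔ'⟩ : ∃ Δ', 1 / 2 < ((F Δ')⁻¹ * F Δ) 0 0 ∧ Δ + 2 ≤ Δ' :=
    ((((h00.tendsto _).comp (hG.inv.mul_const (F Δ))).eventually (lt_mem_nhds hΔ)).and
      (hU (eventually_ge_atTop _))).exists
  refine exists_dMat_mem_closure_horoSat (l := U) (t := fun n => ((n + Δ' : ℕ) : ℝ))
    (δ := fun n => (χ (n + Δ'))⁻¹ * χ (n + Δ)) (fun n => Γ.mul_mem (Γ.inv_mem (hχΓ _)) (hχΓ _))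
    ((tendsto_natCast_atTop_atTop.comp (tendsto_add_atTop_nat Δ')).mono_left hU)
    ((((hF Δ').inv.mul (hF Δ)).mul_const (dMat ((Δ' : ℝ) - Δ))).congr fun n => ?_) ?_
  · have hd : dMat ((n + Δ' : ℕ) : ℝ) = dMat ((n + Δ : ℕ) : ℝ) * dMat ((Δ' : ℝ) - Δ) := by
      rw [← dMat_add]; push_cast; ring_nf
    simp only [e, hd]
    group
  · have hexp : 2 < exp (((Δ' : ℝ) - Δ) / 2) := by
      have h2 : (Δ : ℝ) + 2 ≤ Δ' := by exact_mod_cast hΔΔ'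
      calc (2 : ℝ) = 1 + 1 := by norm_num
        _ < exp 1 := add_one_lt_exp one_ne_zero
        _ ≤ _ := exp_le_exp.2 (by linarith)
    rw [mul_dMat_apply_zero_zero]
    nlinarith

lemma exists_dMat_mem_closure_horoSat_of_short_geodesics {a b : ℝ} (ha : 0 < a)
    (hbg : BoundedGeomBelow Γ a)
    (h : ∀ T : ℝ, ∃ t ≥ T, ∃ γ ∈ Γ, γ ≠ 1 ∧ γ ≠ negOne ∧ dist (ray g₀ t) (γ • ray g₀ t) ≤ b) :
    ∃ t₀ > 0, g₀ * dMat t₀ ∈ closure (horoSat Γ g₀) := by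
  choose t ht γ hγΓ hγ1 hγn hγb using fun n : ℕ => h n
  set p := fun n => g₀ * dMat (t n)
  set q := fun n => (p n)⁻¹ * γ n * p n
  have hq : ∀ n (z : ℍ), dist z (q n • z) = dist (p n • z) (γ n • p n • z) := by
    intro n z
    rw [← dist_smul (p n)]
    simp [q, mul_smul]
  have hqK : ∀ n, q n ∈ {g : SL(2, ℝ) | ∀ i j, |g i j| ≤ 2 * cosh b} := fun n =>
    abs_apply_le_of_dist_I_smul_le (by rw [hq]; exact hγb n)
  have hqtr : ∀ n, 2 * cosh (a / 2) ≤ |q n 0 0 + q n 1 1| := fun n =>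
    two_mul_cosh_half_le_abs_trace ha fun z => by
      rw [hq]; exact hbg _ _ (hγΓ n) (hγ1 n) (hγn n)
  let U := Ultrafilter.of (atTop : Filter ℕ)
  obtain ⟨Q, -, hQ⟩ := (isCompact_setOf_abs_apply_le _).exists_tendsto_ultrafilter U hqK
  have hQtr : 2 < |Q 0 0 + Q 1 1| := by
    have hcosh : 1 < cosh (a / 2) := Real.one_lt_cosh.2 (by positivity)
    have htr : Continuous fun g : SL(2, ℝ) => |g 0 0 + g 1 1| := by fun_prop
    linarith [ge_of_tendsto ((htr.tendsto Q).comp hQ) (Eventually.of_forall hqtr)]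
  obtain ⟨k, hk⟩ := exists_one_lt_zpow_apply_zero_zero hQtr
  refine exists_dMat_mem_closure_horoSat (l := U) (fun n => Γ.zpow_mem (hγΓ n) k)
    ((tendsto_atTop_mono ht tendsto_natCast_atTop_atTop).mono_left (Ultrafilter.of_le _))
    ((hQ.zpow k).congr fun n => ?_) hk
  have hconj := conj_zpow (a := (p n)⁻¹) (b := γ n) (i := k)
  rwa [inv_inv] at hconj

end HorocycleOrbitClosure

/-- **Corollary: dichotomy.** If `Γ` has bounded geometry below some `a > 0`
and `Γ\ℍ` is coarsely tame, then for every `g₀` the horocycle orbit of `Γg₀` is dense in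
`Γ\SL(2,ℝ)`, or some positive geodesic translate `g₀·d(t₀)` lies in its closure. -/
theorem horocycle_orbit_dichotomy (Γ : Subgroup SL(2, ℝ)) (a : ℝ) (ha : 0 < a)
    (hbg : BoundedGeomBelow Γ a) (hct : CoarselyTame Γ) (g₀ : SL(2, ℝ)) :
    Dense (horoSat Γ g₀) ∨ ∃ t₀ > (0 : ℝ), g₀ * dMat t₀ ∈ closure (horoSat Γ g₀) := by
  right
  obtain ⟨-, b, -, hray⟩ := hct
  rcases hray g₀ with ⟨K, hK, hKray⟩ | hshort
  · obtain ⟨R, hR⟩ := hK.isBounded.subset_closedBall I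
    refine exists_dMat_mem_closure_horoSat_of_bounded_ray (R := R) fun n => ?_
    obtain ⟨γ, hγ, hγK⟩ := hKray n n.cast_nonneg
    exact ⟨γ, hγ, hR hγK⟩
  · refine exists_dMat_mem_closure_horoSat_of_short_geodesics (b := b) ha hbg fun T => ?_
    obtain ⟨t, ht, γ, hγ, h1, hn, hdist, hlen⟩ := hshort T
    exact ⟨t, ht, γ, hγ, h1, hn, hdist.trans_le hlen⟩
end
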